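/- arXiv:2510.02507 — 6 statements merged into one kernel-verified Lean document; each statement's English description precedes it below -/
import Mathlib

section
/- Let A be an m×d real matrix with all rows nonzero, c ∈ ℝ^m, and γ, r ∈ ℝ^d. Define the index sets J⁻ = {j : (Aγ)_j < 0}, J⁺ = {j : (Aγ)_j > 0}, J⁰ = {j : (Aγ)_j = 0}, and the quantities Z⁻ = max_{j ∈ J⁻} (c_j − (Ar)_j)/((Aγ)_j) (with Z⁻ = −∞ if J⁻ is empty), Z⁺ = min_{j ∈ J⁺} (c_j − (Ar)_j)/((Aγ)_j) (with Z⁺ = +∞ if J⁺ is empty), and Z⁰ = min_{j ∈ J⁰} (c_j − (Ar)_j) (with Z⁰ = +∞ if J⁰ is empty). Then for every y ∈ ℝ, the componentwise inequality A(r + γy) ≤ c holds if and only if Z⁰ ≥ 0 and Z⁻ ≤ y ≤ Z⁺. -/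
/-- Lee et al. polyhedral truncation representation, single polyhedron.
For an `m × d` real matrix `A` with nonzero rows, cutoff `c`, and vectors `γ, r`,
with `Z⁻ = max_{j : (Aγ)_j < 0} (c_j - (Ar)_j)/(Aγ)_j` (max ∅ = -∞),
`Z⁺ = min_{j : (Aγ)_j > 0} (c_j - (Ar)_j)/(Aγ)_j` (min ∅ = +∞), and
`Z⁰ = min_{j : (Aγ)_j = 0} (c_j - (Ar)_j)` (min ∅ = +∞), we have, for every `y : ℝ`,
`A (r + y γ) ≤ c` componentwise iff `Z⁰ ≥ 0` and `Z⁻ ≤ y ≤ Z⁺`. -/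
theorem stmt0 {m d : ℕ} (A : Matrix (Fin m) (Fin d) ℝ) (hA : ∀ j, A j ≠ 0)
    (c : Fin m → ℝ) (γ r : Fin d → ℝ) :
    ∀ y : ℝ,
      (∀ j, A.mulVec (r + y • γ) j ≤ c j) ↔
        ((0 : EReal) ≤ ⨅ (j) (_ : A.mulVec γ j = 0), ((c j - A.mulVec r j : ℝ) : EReal)) ∧
        ((⨆ (j) (_ : A.mulVec γ j < 0),
            (((c j - A.mulVec r j) / A.mulVec γ j : ℝ) : EReal)) ≤ (y : EReal)) ∧
        ((y : EReal) ≤ ⨅ (j) (_ : 0 < A.mulVec γ j),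
            (((c j - A.mulVec r j) / A.mulVec γ j : ℝ) : EReal)) := by
  intro y
  rw [le_iInf₂_iff, iSup₂_le_iff, le_iInf₂_iff]
  simp only [EReal.coe_nonneg, EReal.coe_le_coe_iff,
    Matrix.mulVec_add, Matrix.mulVec_smul, Pi.add_apply, Pi.smul_apply, smul_eq_mul]
  constructor
  · intro h
    refine ⟨fun j hj => ?_, fun j hj => ?_, fun j hj => ?_⟩
    · have := h j; rw [hj] at this; linarith
    · rw [div_le_iff_of_neg hj]; have := h j; linarith
    · rw [le_div_iff₀ hj]; have := h j; linarith
  · rintro ⟨h0, hneg, hpos⟩ j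
    rcases lt_trichotomy (A.mulVec γ j) 0 with hj | hj | hj
    · have := hneg j hj; rw [div_le_iff_of_neg hj] at this; linarith
    · have := h0 j hj; rw [hj]; linarith
    · have := hpos j hj; rw [le_div_iff₀ hj] at this; linarith
end

section
/- Let K ≥ 1, and for each k = 1, …, K let A_k be an m_k×d real matrix with all rows nonzero and c_k ∈ ℝ^{m_k}; let γ, r ∈ ℝ^d. For each k define Z⁻_k = max_{j : (A_kγ)_j < 0} ((c_k)_j − (A_k r)_j)/((A_kγ)_j), Z⁺_k = min_{j : (A_kγ)_j > 0} ((c_k)_j − (A_k r)_j)/((A_kγ)_j), Z⁰_k = min_{j : (A_kγ)_j = 0} ((c_k)_j − (A_k r)_j) (with the empty-set conventions max ∅ = −∞, min ∅ = +∞), and the set T_k = [Z⁻_k, Z⁺_k] if Z⁰_k ≥ 0 and T_k = ∅ otherwise. Then the set {y ∈ ℝ : there exists k with A_k(r + γy) ≤ c_k componentwise} equals the union T_1 ∪ ⋯ ∪ T_K. -/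
/-- Polyhedral truncation representation, union of `K` polyhedra.
For matrices `A k` with nonzero rows, cutoffs `c k`, and vectors `γ, r`, the set of
`y ∈ ℝ` such that `A k (r + y γ) ≤ c k` componentwise for some `k` equals the union
over `k` of the truncation sets `T k`, where `T k = [Z⁻ k, Z⁺ k]` if `Z⁰ k ≥ 0`
and `T k = ∅` otherwise (with the empty-set conventions max ∅ = -∞, min ∅ = +∞). -/
theorem stmt1 {K d : ℕ} (hK : 1 ≤ K) (m : Fin K → ℕ)
    (A : ∀ k, Matrix (Fin (m k)) (Fin d) ℝ)
    (hA : ∀ k j, A k j ≠ 0)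
    (c : ∀ k, Fin (m k) → ℝ) (γ r : Fin d → ℝ) :
    {y : ℝ | ∃ k, ∀ j, (A k).mulVec (r + y • γ) j ≤ c k j} =
      ⋃ k, {y : ℝ |
        ((0 : EReal) ≤ ⨅ (j) (_ : (A k).mulVec γ j = 0),
            ((c k j - (A k).mulVec r j : ℝ) : EReal)) ∧
        ((⨆ (j) (_ : (A k).mulVec γ j < 0),
            (((c k j - (A k).mulVec r j) / (A k).mulVec γ j : ℝ) : EReal)) ≤ (y : EReal)) ∧
        ((y : EReal) ≤ ⨅ (j) (_ : 0 < (A k).mulVec γ j),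
            (((c k j - (A k).mulVec r j) / (A k).mulVec γ j : ℝ) : EReal))} := by
  ext y
  simp only [Set.mem_setOf_eq, Set.mem_iUnion]
  have key : ∀ k (j : Fin (m k)),
      (A k).mulVec (r + y • γ) j = (A k).mulVec r j + y * (A k).mulVec γ j := by
    intro k j
    rw [Matrix.mulVec_add, Matrix.mulVec_smul]
    simp [smul_eq_mul]
  constructor
  · rintro ⟨k, h⟩
    refine ⟨k, ?_, ?_, ?_⟩
    · refine le_iInf₂ fun j hj => ?_
      have := h j
      rw [key, hj, mul_zero, add_zero] at this
      exact_mod_cast sub_nonneg.mpr this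
    · refine iSup₂_le fun j hj => ?_
      have := h j
      rw [key] at this
      have : y * (A k).mulVec γ j ≤ c k j - (A k).mulVec r j := by linarith
      exact_mod_cast (div_le_iff_of_neg hj).mpr this
    · refine le_iInf₂ fun j hj => ?_
      have := h j
      rw [key] at this
      have : y * (A k).mulVec γ j ≤ c k j - (A k).mulVec r j := by linarith
      exact_mod_cast (le_div_iff₀ hj).mpr this
  · rintro ⟨k, h0, h1, h2⟩
    refine ⟨k, fun j => ?_⟩
    rw [key]
    rcases lt_trichotomy ((A k).mulVec γ j) 0 with hj | hj | hj
    · have : ((c k j - (A k).mulVec r j) / (A k).mulVec γ j : ℝ) ≤ y := by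
        exact_mod_cast le_trans (le_iSup₂ (f := fun j (_ : (A k).mulVec γ j < 0) =>
          (((c k j - (A k).mulVec r j) / (A k).mulVec γ j : ℝ) : EReal)) j hj) h1
      have := (div_le_iff_of_neg hj).mp this
      linarith
    · have : (0 : ℝ) ≤ c k j - (A k).mulVec r j := by
        exact_mod_cast le_trans h0 (iInf₂_le (f := fun j (_ : (A k).mulVec γ j = 0) =>
          ((c k j - (A k).mulVec r j : ℝ) : EReal)) j hj)
      rw [hj]
      linarith
    · have : (y : ℝ) ≤ (c k j - (A k).mulVec r j) / (A k).mulVec γ j := by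
        exact_mod_cast le_trans h2 (iInf₂_le (f := fun j (_ : 0 < (A k).mulVec γ j) =>
          (((c k j - (A k).mulVec r j) / (A k).mulVec γ j : ℝ) : EReal)) j hj)
      have := (le_div_iff₀ hj).mp this
      linarith
end

section
/- Fix σ > 0 and z ∈ ℝ, and let T ⊆ ℝ be a Lebesgue-measurable set such that both T ∩ (−∞, z] and T ∩ (z, ∞) have positive Lebesgue measure. Then the map μ ↦ F_TN(z; μ, σ², T) is strictly decreasing on ℝ. -/
/-!
For `μ₁ < μ₂` the ratio of Gaussian densities
`φ_{μ₂}(t) / φ_{μ₁}(t) = exp ((μ₂ - μ₁) (2t - μ₁ - μ₂) / 2σ²)` is strictly increasing in `t`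
(monotone likelihood ratio). With `r` its value at `z`, this gives `φ_{μ₂} ≤ r φ_{μ₁}` on
`T ∩ (-∞, z]` and `φ_{μ₂} > r φ_{μ₁}` on `T ∩ (z, ∞)`. Integrating, the Gaussian weights
`Aᵢ` of `T ∩ (-∞, z]` and `Bᵢ` of `T ∩ (z, ∞)` satisfy `A₂ ≤ r A₁` and `r B₁ < B₂`, hence
`A₂ B₁ < A₁ B₂`, which is `A₂ / (A₂ + B₂) < A₁ / (A₁ + B₁)`.
-/

open MeasureTheory

/-- The truncated normal CDF: `F_TN(z; μ, σ², T)` is the Gaussian weight of `T ∩ (-∞, z]`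
divided by the Gaussian weight of `T` (with value 0 when the denominator vanishes, matching
the Lean convention `x / 0 = 0`). -/
noncomputable def FTN (z μ σ2 : ℝ) (T : Set ℝ) : ℝ :=
  (∫ t in T ∩ Set.Iic z, Real.exp (-(t - μ) ^ 2 / (2 * σ2))) /
    (∫ t in T, Real.exp (-(t - μ) ^ 2 / (2 * σ2)))

open Set Real

section LikelihoodRatio

variable {α : Type*} [MeasurableSpace α] {ν : Measure α} {f g : α → ℝ} {S U : Set α} {r : ℝ}

theorem integral_pos_of_ae_pos [NeZero ν] (hf : Integrable f ν) (hpos : ∀ᵐ x ∂ν, 0 < f x) :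
    0 < ∫ x, f x ∂ν := by
  have hnonneg : 0 ≤ᵐ[ν] f := hpos.mono fun _ hx => hx.le
  refine (integral_nonneg_of_ae hnonneg).lt_of_ne' fun hzero => NeZero.ne ν ?_
  have hfalse : ∀ᵐ x ∂ν, False := by
    filter_upwards [hpos, (integral_eq_zero_iff_of_nonneg_ae hnonneg hf).1 hzero] with x hx hx0
    exact hx.ne' hx0
  exact ae_eq_bot.1 (Filter.eventually_false_iff_eq_bot.1 hfalse)

theorem setIntegral_mul_setIntegral_lt_of_le_mul_of_mul_lt (hS : MeasurableSet S)
    (hU : MeasurableSet U) (hνU : ν U ≠ 0) (hfS : IntegrableOn f S ν) (hgS : IntegrableOn g S ν)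
    (hfU : IntegrableOn f U ν) (hgU : IntegrableOn g U ν) (hA : 0 < ∫ x in S, f x ∂ν)
    (hB : 0 ≤ ∫ x in U, f x ∂ν) (hle : ∀ x ∈ S, g x ≤ r * f x) (hlt : ∀ x ∈ U, r * f x < g x) :
    (∫ x in S, g x ∂ν) * (∫ x in U, f x ∂ν) < (∫ x in S, f x ∂ν) * ∫ x in U, g x ∂ν := by
  have hAr : ∫ x in S, g x ∂ν ≤ r * ∫ x in S, f x ∂ν := by
    rw [← integral_const_mul]
    exact setIntegral_mono_on hgS (hfS.const_mul r) hS hle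
  have hBr : r * ∫ x in U, f x ∂ν < ∫ x in U, g x ∂ν := by
    have : NeZero (ν.restrict U) := ⟨by rwa [Ne, Measure.restrict_eq_zero]⟩
    rw [← sub_pos, ← integral_const_mul, ← integral_sub hgU (hfU.const_mul r)]
    exact integral_pos_of_ae_pos (hgU.sub (hfU.const_mul r))
      ((ae_restrict_mem hU).mono fun x hx => sub_pos.2 (hlt x hx))
  calc (∫ x in S, g x ∂ν) * (∫ x in U, f x ∂ν)
      ≤ (r * ∫ x in S, f x ∂ν) * ∫ x in U, f x ∂ν := mul_le_mul_of_nonneg_right hAr hB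
    _ = (∫ x in S, f x ∂ν) * (r * ∫ x in U, f x ∂ν) := by ring
    _ < (∫ x in S, f x ∂ν) * ∫ x in U, g x ∂ν := mul_lt_mul_of_pos_left hBr hA

end LikelihoodRatio

section Gaussian

variable {σ2 : ℝ}

theorem integrable_exp_neg_sq_sub_div (hσ2 : 0 < σ2) (μ : ℝ) :
    Integrable fun t : ℝ => exp (-(t - μ) ^ 2 / (2 * σ2)) := by
  convert (integrable_exp_neg_mul_sq (b := 1 / (2 * σ2)) (by positivity)).comp_sub_right μ
    using 2 with t
  ring_nf

theorem setIntegral_exp_neg_sq_sub_div_pos (hσ2 : 0 < σ2) (μ : ℝ) {S : Set ℝ}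
    (hS : volume S ≠ 0) : 0 < ∫ t in S, exp (-(t - μ) ^ 2 / (2 * σ2)) :=
  have : NeZero (volume.restrict S) := ⟨by rwa [Ne, Measure.restrict_eq_zero]⟩
  integral_exp_pos (integrable_exp_neg_sq_sub_div hσ2 μ).integrableOn

theorem exp_neg_sq_sub_div_eq_exp_mul (hσ2 : σ2 ≠ 0) (μ₁ μ₂ t : ℝ) :
    exp (-(t - μ₂) ^ 2 / (2 * σ2)) =
      exp ((μ₂ - μ₁) * (2 * t - μ₁ - μ₂) / (2 * σ2)) * exp (-(t - μ₁) ^ 2 / (2 * σ2)) := by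
  rw [← exp_add]
  congr 1
  field_simp
  ring

theorem exp_neg_sq_sub_div_le_mul_iff (hσ2 : 0 < σ2) {μ₁ μ₂ : ℝ} (hμ : μ₁ < μ₂) (t z : ℝ) :
    exp (-(t - μ₂) ^ 2 / (2 * σ2)) ≤
        exp ((μ₂ - μ₁) * (2 * z - μ₁ - μ₂) / (2 * σ2)) * exp (-(t - μ₁) ^ 2 / (2 * σ2)) ↔
      t ≤ z := by
  rw [exp_neg_sq_sub_div_eq_exp_mul hσ2.ne' μ₁, mul_le_mul_iff_left₀ (exp_pos _), exp_le_exp,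
    div_le_div_iff_of_pos_right (by positivity), mul_le_mul_iff_right₀ (sub_pos.2 hμ)]
  constructor <;> intro h <;> linarith

end Gaussian

/-- if both `T ∩ (-∞, z]` and `T ∩ (z, ∞)` have positive Lebesgue measure,
then `μ ↦ F_TN(z; μ, σ², T)` is strictly decreasing on `ℝ`. -/
theorem stmt6 (σ : ℝ) (hσ : 0 < σ) (z : ℝ) (T : Set ℝ) (hT : MeasurableSet T)
    (h1 : 0 < volume (T ∩ Set.Iic z))
    (h2 : 0 < volume (T ∩ Set.Ioi z)) :
    StrictAnti (fun μ : ℝ => FTN z μ (σ ^ 2) T) := by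
  intro μ₁ μ₂ hμ
  have hσ2 : 0 < σ ^ 2 := by positivity
  have hsplit (μ : ℝ) := integral_inter_add_sdiff (s := T) (measurableSet_Iic (a := z))
    (integrable_exp_neg_sq_sub_div hσ2 μ).integrableOn
  rw [sdiff_eq, compl_Iic] at hsplit
  have hA (μ : ℝ) := setIntegral_exp_neg_sq_sub_div_pos hσ2 μ h1.ne'
  have hB (μ : ℝ) := setIntegral_exp_neg_sq_sub_div_pos hσ2 μ h2.ne'
  have hcross := setIntegral_mul_setIntegral_lt_of_le_mul_of_mul_lt
    (hT.inter measurableSet_Iic) (hT.inter measurableSet_Ioi) h2.ne'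
    (integrable_exp_neg_sq_sub_div hσ2 μ₁).integrableOn
    (integrable_exp_neg_sq_sub_div hσ2 μ₂).integrableOn
    (integrable_exp_neg_sq_sub_div hσ2 μ₁).integrableOn
    (integrable_exp_neg_sq_sub_div hσ2 μ₂).integrableOn (hA μ₁) (hB μ₁).le
    (fun t ht => (exp_neg_sq_sub_div_le_mul_iff hσ2 hμ t z).2 ht.2)
    (fun t ht => not_le.1 ((exp_neg_sq_sub_div_le_mul_iff hσ2 hμ t z).not.2 ht.2.not_ge))
  simp only [FTN, ← hsplit]
  rw [div_lt_div_iff₀ (add_pos (hA μ₂) (hB μ₂)) (add_pos (hA μ₁) (hB μ₁))]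
  linarith
end

section
/- Fix σ > 0, z ∈ ℝ, and α ∈ (0,1), and let T ⊆ ℝ be a Lebesgue-measurable set such that both T ∩ (−∞, z] and T ∩ (z, ∞) have positive Lebesgue measure. Then there exists a unique μ* ∈ ℝ satisfying F_TN(z; μ*, σ², T) = 1 − α. -/
open MeasureTheory

/-!
Writing `μ = z + σ² ν`, the Gaussian kernel centred at `μ` is, up to a factor that does not depend
on `t`, the kernel centred at `z` multiplied by the tilt `exp (ν (t - z))`. Raising `ν` shrinks the
tilted kernel on `(-∞, z]` and strictly enlarges it on `(z, ∞)`, so `F_TN` is a continuous,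
strictly decreasing function of `ν`; comparing the two sides for large `|ν|` shows it takes values
arbitrarily close to `0` and to `1`. The intermediate value theorem gives `μ*`, strict
monotonicity its uniqueness.
-/

open Real Set

section General

variable {X : Type*} [MeasurableSpace X] {μ : Measure X} {s : Set X}

lemma setIntegral_lt_setIntegral_of_forall_lt {f g : X → ℝ} (hs : MeasurableSet s)
    (hμs : μ s ≠ 0) (hf : IntegrableOn f s μ) (hg : IntegrableOn g s μ)
    (hfg : ∀ x ∈ s, f x < g x) : ∫ x in s, f x ∂μ < ∫ x in s, g x ∂μ := by
  rw [← sub_pos, ← integral_sub hg hf,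
    setIntegral_pos_iff_support_of_nonneg_ae
      (ae_restrict_of_forall_mem hs fun x hx => (sub_pos.2 (hfg x hx)).le) (hg.sub hf)]
  have : s ⊆ Function.support (g - f) ∩ s :=
    fun x hx => ⟨(sub_pos.2 (hfg x hx)).ne', hx⟩
  exact (measure_mono this).trans_lt' (pos_iff_ne_zero.2 hμs)

lemma exists_pos_measure_inter_le_of_forall_pos {f : X → ℝ} (hμs : μ s ≠ 0)
    (hf : ∀ x ∈ s, 0 < f x) : ∃ δ > 0, μ (s ∩ {x | δ ≤ f x}) ≠ 0 := by
  by_contra! H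
  have hcover : s ⊆ ⋃ n : ℕ, s ∩ {x | 1 / (n + 1 : ℝ) ≤ f x} := fun x hx =>
    let ⟨n, hn⟩ := exists_nat_one_div_lt (hf x hx)
    mem_iUnion.2 ⟨n, hx, hn.le⟩
  exact hμs (measure_mono_null hcover (measure_iUnion_null fun n => H _ (by positivity)))

lemma StrictAnti.existsUnique_eq {f : ℝ → ℝ} (hf : StrictAnti f) (hc : Continuous f) {a b c : ℝ}
    (ha : c < f a) (hb : f b < c) : ∃! x, f x = c := by
  obtain ⟨x, hx⟩ := intermediate_value_univ b a hc ⟨hb.le, ha.le⟩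
  exact ⟨x, hx, fun y hy => hf.injective (hy.trans hx.symm)⟩

end General

namespace TruncatedNormal

/-- Moving the mean of the Gaussian kernel from `z` to `μ` amounts, up to a factor independent
of `t`, to the tilt `ν = (μ - z) / s` (see `exp_neg_sq_sub_eq`). -/
noncomputable def tiltedGauss (s z ν t : ℝ) : ℝ :=
  exp (-(t - z) ^ 2 / (2 * s) + ν * (t - z))

noncomputable def tiltedCDF (s z : ℝ) (T : Set ℝ) (ν : ℝ) : ℝ :=
  (∫ t in T ∩ Iic z, tiltedGauss s z ν t) / ∫ t in T, tiltedGauss s z ν t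

variable {s z : ℝ}

lemma exp_neg_sq_sub_eq (s z μ t : ℝ) :
    exp (-(t - μ) ^ 2 / (2 * s)) =
      exp (-(z - μ) ^ 2 / (2 * s)) * tiltedGauss s z ((μ - z) / s) t := by
  rw [tiltedGauss, ← exp_add]
  ring_nf

lemma tiltedGauss_pos (s z ν t : ℝ) : 0 < tiltedGauss s z ν t := exp_pos _

lemma tiltedGauss_eq_mul_exp (s z ν ν' t : ℝ) :
    tiltedGauss s z ν' t = tiltedGauss s z ν t * exp ((ν' - ν) * (t - z)) := by
  rw [tiltedGauss, tiltedGauss, ← exp_add]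
  ring_nf

lemma integrable_exp_neg_sq_sub (hs : 0 < s) (μ : ℝ) :
    Integrable fun t => exp (-(t - μ) ^ 2 / (2 * s)) := by
  refine ((integrable_exp_neg_mul_sq (by positivity : 0 < 1 / (2 * s))).comp_sub_right μ).congr
    (ae_of_all _ fun t => ?_)
  ring_nf

lemma integrable_tiltedGauss (hs : 0 < s) (z ν : ℝ) : Integrable (tiltedGauss s z ν) := by
  have h := (integrable_exp_neg_sq_sub hs (z + s * ν)).const_mul
    (exp (-(z - (z + s * ν)) ^ 2 / (2 * s)))⁻¹
  refine h.congr (ae_of_all _ fun t => ?_)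
  simp only [exp_neg_sq_sub_eq s z (z + s * ν) t, inv_mul_cancel_left₀ (exp_pos _).ne']
  congr
  field_simp
  ring

lemma setIntegral_tiltedGauss_pos (hs : 0 < s) {S : Set ℝ} (hS : volume S ≠ 0) (ν : ℝ) :
    0 < ∫ t in S, tiltedGauss s z ν t := by
  rw [setIntegral_pos_iff_support_of_nonneg_ae (ae_of_all _ fun t => (tiltedGauss_pos ..).le)
    (integrable_tiltedGauss hs z ν).integrableOn]
  simpa [Function.support, (tiltedGauss_pos ..).ne'] using pos_iff_ne_zero.2 hS

lemma tiltedGauss_le_add {a b ν : ℝ} (hν : ν ∈ Icc a b) (t : ℝ) :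
    tiltedGauss s z ν t ≤ tiltedGauss s z a t + tiltedGauss s z b t := by
  rcases le_total 0 (t - z) with ht | ht
  · refine (exp_le_exp.2 ?_).trans (le_add_of_nonneg_left (tiltedGauss_pos ..).le)
    gcongr
    exact hν.2
  · refine (exp_le_exp.2 ?_).trans (le_add_of_nonneg_right (tiltedGauss_pos ..).le)
    have := mul_le_mul_of_nonpos_right hν.1 ht
    linarith

lemma continuous_setIntegral_tiltedGauss (hs : 0 < s) (z : ℝ) (S : Set ℝ) :
    Continuous fun ν => ∫ t in S, tiltedGauss s z ν t := by
  refine continuous_iff_continuousAt.2 fun ν₀ => ContinuousOn.continuousAt ?_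
    (Icc_mem_nhds (sub_one_lt ν₀) (lt_add_one ν₀))
  refine continuousOn_of_dominated
    (bound := fun t => tiltedGauss s z (ν₀ - 1) t + tiltedGauss s z (ν₀ + 1) t)
    (fun ν _ => (integrable_tiltedGauss hs z ν).aestronglyMeasurable.restrict)
    (fun ν hν => ae_of_all _ fun t => ?_)
    ((integrable_tiltedGauss hs z _).add (integrable_tiltedGauss hs z _)).integrableOn
    (ae_of_all _ fun t => by unfold tiltedGauss; fun_prop)
  rw [norm_of_nonneg (tiltedGauss_pos ..).le]
  exact tiltedGauss_le_add hν t

variable {S : Set ℝ} {ν ν' c : ℝ}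

lemma setIntegral_tiltedGauss_le (hs : 0 < s) (hS : MeasurableSet S)
    (h : ∀ t ∈ S, (ν' - ν) * (t - z) ≤ c) :
    ∫ t in S, tiltedGauss s z ν' t ≤ exp c * ∫ t in S, tiltedGauss s z ν t := by
  rw [← integral_const_mul]
  refine setIntegral_mono_on (integrable_tiltedGauss hs z ν').integrableOn
    ((integrable_tiltedGauss hs z ν).integrableOn.const_mul _) hS fun t ht => ?_
  rw [tiltedGauss_eq_mul_exp s z ν ν' t, mul_comm (exp c)]
  exact mul_le_mul_of_nonneg_left (exp_le_exp.2 (h t ht)) (tiltedGauss_pos ..).le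

lemma le_setIntegral_tiltedGauss (hs : 0 < s) (hS : MeasurableSet S)
    (h : ∀ t ∈ S, c ≤ (ν' - ν) * (t - z)) :
    exp c * ∫ t in S, tiltedGauss s z ν t ≤ ∫ t in S, tiltedGauss s z ν' t := by
  rw [← integral_const_mul]
  refine setIntegral_mono_on ((integrable_tiltedGauss hs z ν).integrableOn.const_mul _)
    (integrable_tiltedGauss hs z ν').integrableOn hS fun t ht => ?_
  rw [tiltedGauss_eq_mul_exp s z ν ν' t, mul_comm (exp c)]
  exact mul_le_mul_of_nonneg_left (exp_le_exp.2 (h t ht)) (tiltedGauss_pos ..).le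

lemma setIntegral_tiltedGauss_lt (hs : 0 < s) (hS : MeasurableSet S) (hS0 : volume S ≠ 0)
    (h : ∀ t ∈ S, 0 < (ν' - ν) * (t - z)) :
    ∫ t in S, tiltedGauss s z ν t < ∫ t in S, tiltedGauss s z ν' t := by
  refine setIntegral_lt_setIntegral_of_forall_lt hS hS0
    (integrable_tiltedGauss hs z ν).integrableOn (integrable_tiltedGauss hs z ν').integrableOn
    fun t ht => ?_
  rw [tiltedGauss_eq_mul_exp s z ν ν']
  exact lt_mul_of_one_lt_right (tiltedGauss_pos ..) (one_lt_exp_iff.2 (h t ht))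

lemma exists_mul_lt_setIntegral_tiltedGauss (hs : 0 < s) {A B : Set ℝ} (hA : MeasurableSet A)
    (hB : MeasurableSet B) (hB0 : volume B ≠ 0) {η : ℝ} (hAη : ∀ t ∈ A, η * (t - z) ≤ 0)
    (hBη : ∀ t ∈ B, 0 < η * (t - z)) (r : ℝ) :
    ∃ ν, r * ∫ t in A, tiltedGauss s z ν t < ∫ t in B, tiltedGauss s z ν t := by
  obtain ⟨δ, hδ, hB'0⟩ := exists_pos_measure_inter_le_of_forall_pos hB0 hBη
  set B' := B ∩ {t | δ ≤ η * (t - z)}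
  have hB' : MeasurableSet B' := hB.inter (measurableSet_le measurable_const (by fun_prop))
  set a := ∫ t in A, tiltedGauss s z 0 t
  set b := ∫ t in B', tiltedGauss s z 0 t
  have ha : 0 ≤ a := setIntegral_nonneg hA fun t _ => (tiltedGauss_pos ..).le
  have hb : 0 < b := setIntegral_tiltedGauss_pos hs hB'0 0
  set l := |r| * a / (δ * b) with hl_def
  have hl : 0 ≤ l := by positivity
  refine ⟨l * η, ?_⟩
  have hAle : ∫ t in A, tiltedGauss s z (l * η) t ≤ a := by
    simpa using setIntegral_tiltedGauss_le hs hA (ν := 0) (c := 0) fun t ht => by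
      rw [sub_zero, mul_assoc]; exact mul_nonpos_of_nonneg_of_nonpos hl (hAη t ht)
  have hB'ge : exp (l * δ) * b ≤ ∫ t in B', tiltedGauss s z (l * η) t :=
    le_setIntegral_tiltedGauss hs hB' fun t ht => by
      rw [sub_zero, mul_assoc]; exact mul_le_mul_of_nonneg_left ht.2 hl
  have hlδ : l * δ * b = |r| * a := by rw [hl_def]; field_simp
  calc r * ∫ t in A, tiltedGauss s z (l * η) t ≤ |r| * a :=
        (mul_le_mul_of_nonneg_right (le_abs_self r)
          (setIntegral_nonneg hA fun t _ => (tiltedGauss_pos ..).le)).trans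
          (mul_le_mul_of_nonneg_left hAle (abs_nonneg r))
    _ < exp (l * δ) * b := by
        rw [← hlδ]
        exact mul_lt_mul_of_pos_right ((lt_add_one _).trans_le (add_one_le_exp _)) hb
    _ ≤ ∫ t in B', tiltedGauss s z (l * η) t := hB'ge
    _ ≤ ∫ t in B, tiltedGauss s z (l * η) t :=
        setIntegral_mono_set (integrable_tiltedGauss hs z _).integrableOn
          (ae_of_all _ fun t => (tiltedGauss_pos ..).le) inter_subset_left.eventuallyLE

lemma FTN_eq_tiltedCDF (z μ s : ℝ) (T : Set ℝ) :
    FTN z μ s T = tiltedCDF s z T ((μ - z) / s) := by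
  rw [FTN, tiltedCDF]
  conv_rhs => rw [← mul_div_mul_left _ _ (exp_pos (-(z - μ) ^ 2 / (2 * s))).ne',
    ← integral_const_mul, ← integral_const_mul]
  simp only [← exp_neg_sq_sub_eq s z μ]

lemma tiltedCDF_eq_div_add (hs : 0 < s) (T : Set ℝ) (ν : ℝ) :
    tiltedCDF s z T ν = (∫ t in T ∩ Iic z, tiltedGauss s z ν t) /
      ((∫ t in T ∩ Iic z, tiltedGauss s z ν t) + ∫ t in T ∩ Ioi z, tiltedGauss s z ν t) := by
  rw [tiltedCDF, ← integral_inter_add_sdiff (s := T) measurableSet_Iic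
    (integrable_tiltedGauss hs z ν).integrableOn, sdiff_eq, compl_Iic]

variable {T : Set ℝ}

lemma continuous_tiltedCDF (hs : 0 < s) (hTl : volume (T ∩ Iic z) ≠ 0) :
    Continuous (tiltedCDF s z T) :=
  (continuous_setIntegral_tiltedGauss hs z _).div (continuous_setIntegral_tiltedGauss hs z _)
    fun ν => (setIntegral_tiltedGauss_pos hs (mt (measure_mono_null inter_subset_left) hTl) ν).ne'

lemma strictAnti_tiltedCDF (hs : 0 < s) (hT : MeasurableSet T) (hTl : volume (T ∩ Iic z) ≠ 0)
    (hTr : volume (T ∩ Ioi z) ≠ 0) : StrictAnti (tiltedCDF s z T) := by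
  intro ν ν' hνν'
  simp only [tiltedCDF_eq_div_add hs]
  have hl := setIntegral_tiltedGauss_pos hs hTl (z := z)
  have hr := setIntegral_tiltedGauss_pos hs hTr (z := z)
  have hl_anti :
      ∫ t in T ∩ Iic z, tiltedGauss s z ν' t ≤ ∫ t in T ∩ Iic z, tiltedGauss s z ν t := by
    simpa using setIntegral_tiltedGauss_le hs (hT.inter measurableSet_Iic) (c := 0) fun t ht =>
      mul_nonpos_of_nonneg_of_nonpos (sub_nonneg.2 hνν'.le) (sub_nonpos.2 ht.2)
  have hr_mono :
      ∫ t in T ∩ Ioi z, tiltedGauss s z ν t < ∫ t in T ∩ Ioi z, tiltedGauss s z ν' t :=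
    setIntegral_tiltedGauss_lt hs (hT.inter measurableSet_Ioi) hTr fun t ht =>
      mul_pos (sub_pos.2 hνν') (sub_pos.2 ht.2)
  rw [div_lt_div_iff₀ (add_pos (hl ν') (hr ν')) (add_pos (hl ν) (hr ν))]
  nlinarith [hl ν, hl ν', hr ν]

lemma exists_tiltedCDF_lt (hs : 0 < s) (hT : MeasurableSet T) (hTr : volume (T ∩ Ioi z) ≠ 0)
    {c : ℝ} (hc : 0 < c) : ∃ ν, tiltedCDF s z T ν < c := by
  obtain ⟨ν, hν⟩ := exists_mul_lt_setIntegral_tiltedGauss hs (hT.inter measurableSet_Iic)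
    (hT.inter measurableSet_Ioi) hTr (η := 1) (fun t ht => by simpa using ht.2)
    (fun t ht => by simpa using ht.2) ((1 - c) / c)
  refine ⟨ν, ?_⟩
  rw [div_mul_eq_mul_div, div_lt_iff₀ hc] at hν
  rw [tiltedCDF_eq_div_add hs, div_lt_iff₀ (add_pos_of_nonneg_of_pos
    (setIntegral_nonneg (hT.inter measurableSet_Iic) fun t _ => (tiltedGauss_pos ..).le)
    (setIntegral_tiltedGauss_pos hs hTr ν))]
  linarith

lemma exists_lt_tiltedCDF (hs : 0 < s) (hT : MeasurableSet T) (hTl : volume (T ∩ Iic z) ≠ 0)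
    {c : ℝ} (hc : c < 1) : ∃ ν, c < tiltedCDF s z T ν := by
  have hTl' : volume (T ∩ Iio z) ≠ 0 := by
    rwa [measure_congr ((ae_eq_refl T).inter Iio_ae_eq_Iic)]
  obtain ⟨ν, hν⟩ := exists_mul_lt_setIntegral_tiltedGauss hs (hT.inter measurableSet_Ioi)
    (hT.inter measurableSet_Iio) hTl' (z := z) (η := -1) (fun t ht => by simpa using ht.2.le)
    (fun t ht => by simpa using ht.2) (c / (1 - c))
  have hIio_le : ∫ t in T ∩ Iio z, tiltedGauss s z ν t ≤ ∫ t in T ∩ Iic z, tiltedGauss s z ν t :=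
    setIntegral_mono_set (integrable_tiltedGauss hs z ν).integrableOn
      (ae_of_all _ fun t => (tiltedGauss_pos ..).le)
      (inter_subset_inter_right T Iio_subset_Iic_self).eventuallyLE
  refine ⟨ν, ?_⟩
  rw [div_mul_eq_mul_div, div_lt_iff₀ (sub_pos.2 hc)] at hν
  rw [tiltedCDF_eq_div_add hs, lt_div_iff₀ (add_pos_of_pos_of_nonneg
    (setIntegral_tiltedGauss_pos hs hTl ν)
    (setIntegral_nonneg (hT.inter measurableSet_Ioi) fun t _ => (tiltedGauss_pos ..).le))]
  nlinarith

end TruncatedNormal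

open TruncatedNormal in
/-- Existence and uniqueness of the quantile conditionally unbiased
estimator: if both `T ∩ (-∞, z]` and `T ∩ (z, ∞)` have positive Lebesgue measure, there is a
unique `μ*` with `F_TN(z; μ*, σ², T) = 1 - α`. -/
theorem stmt7 (σ : ℝ) (hσ : 0 < σ) (z : ℝ) (α : ℝ) (hα : α ∈ Set.Ioo (0 : ℝ) 1)
    (T : Set ℝ) (hT : MeasurableSet T)
    (h1 : 0 < volume (T ∩ Set.Iic z))
    (h2 : 0 < volume (T ∩ Set.Ioi z)) :
    ∃! μstar : ℝ, FTN z μstar (σ ^ 2) T = 1 - α := by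
  have hs : 0 < σ ^ 2 := pow_pos hσ 2
  have hbij : Function.Bijective fun μ : ℝ => (μ - z) / σ ^ 2 :=
    ((Equiv.subRight z).trans (Equiv.divRight₀ _ hs.ne')).bijective
  simp only [FTN_eq_tiltedCDF]
  refine (hbij.existsUnique_iff (p := fun ν => tiltedCDF (σ ^ 2) z T ν = 1 - α)).1 ?_
  obtain ⟨ν₁, hν₁⟩ := exists_lt_tiltedCDF hs hT h1.ne' (sub_lt_self 1 hα.1)
  obtain ⟨ν₂, hν₂⟩ := exists_tiltedCDF_lt hs hT h2.ne' (sub_pos.2 hα.2)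
  exact (strictAnti_tiltedCDF hs hT h1.ne' h2.ne').existsUnique_eq
    (continuous_tiltedCDF hs h1.ne') hν₁ hν₂
end

section
/- Let (Ω, P) be a probability space, σ > 0, θ ∈ ℝ, and let Y : Ω → ℝ be a random variable with law gaussian(θ, σ²) (the normal distribution with mean θ and variance σ²). Let R : Ω → E be measurable into a measurable space E, independent of Y, and let T : E → Set(ℝ) be a family of sets whose graph {(e, t) : t ∈ T(e)} is measurable in E × ℝ. Suppose P(Y ∈ T(R)) > 0. Then for every u ∈ [0,1]: P({F_TN(Y; θ, σ², T(R)) ≤ u} ∩ {Y ∈ T(R)}) = u · P(Y ∈ T(R)); equivalently, conditional on the event {Y ∈ T(R)}, the random variable F_TN(Y; θ, σ², T(R)) is uniformly distributed on (0,1). -/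
/-! Conditionally on `R = e`, the variable `Y` is still `N(θ, σ²)` by independence, and
`F_TN(·; θ, σ², T(e))` is exactly the CDF of that law conditioned on `T(e)`. This conditioned law
has no atoms, so its CDF is continuous and transports it to the uniform law on `[0, 1]` (the
probability integral transform); integrating over the law of `R` gives the claim. -/

open MeasureTheory ProbabilityTheory

open Set Filter Topology NNReal Real

namespace ProbabilityTheory

section Cdf

variable {μ : Measure ℝ}

lemma continuous_cdf [IsProbabilityMeasure μ] [NullSingletonClass μ] : Continuous (cdf μ) := by
  refine continuous_iff_continuousAt.2 fun x => ?_
  have hleft : Function.leftLim (cdf μ) x = cdf μ x := by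
    refine le_antisymm ((monotone_cdf μ).leftLim_le le_rfl) ?_
    have h := (cdf μ).measure_singleton x
    rw [measure_cdf, measure_singleton, eq_comm, ENNReal.ofReal_eq_zero] at h
    linarith
  rw [(monotone_cdf μ).continuousAt_iff_leftLim_eq_rightLim, hleft, (cdf μ).rightLim_eq]

lemma measure_setOf_cdf_le [IsProbabilityMeasure μ] [NullSingletonClass μ] {u : ℝ}
    (hu : u ∈ Icc (0 : ℝ) 1) : μ {y | cdf μ y ≤ u} = ENNReal.ofReal u := by
  set M := {y | cdf μ y ≤ u}
  rcases hu.2.eq_or_lt with rfl | hu1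
  · simp [M, cdf_le_one]
  have hbdd : BddAbove M := by
    obtain ⟨z, hz⟩ := ((tendsto_cdf_atTop μ).eventually (eventually_gt_nhds hu1)).exists
    exact ⟨z, fun y hy => not_lt.1 fun hzy => (hz.trans_le ((monotone_cdf μ) hzy.le)).not_ge hy⟩
  rcases M.eq_empty_or_nonempty with hM | hM
  · have hu0 : u = 0 := by
      refine le_antisymm (not_lt.1 fun hu0 => ?_) hu.1
      obtain ⟨z, hz⟩ := ((tendsto_cdf_atBot μ).eventually (eventually_lt_nhds hu0)).exists
      exact hM.subset hz.le
    simp [hM, hu0]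
  set m := sSup M
  have hmM : m ∈ M := (isClosed_le continuous_cdf continuous_const).csSup_mem hM hbdd
  have hM_eq : M = Iic m :=
    Subset.antisymm (fun y hy => le_csSup hbdd hy) fun y hy => (monotone_cdf μ hy).trans hmM
  have hcdf_m : cdf μ m = u := by
    refine le_antisymm hmM
      (ge_of_tendsto (continuous_cdf.continuousAt.continuousWithinAt (s := Ioi m)) ?_)
    filter_upwards [self_mem_nhdsWithin] with y (hy : m < y)
    exact (not_le.1 fun h => hy.not_ge (le_csSup hbdd h)).le
  rw [hM_eq, ← ofReal_cdf, hcdf_m]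

end Cdf

section Cond

variable {Ω : Type*} [MeasurableSpace Ω] {ν : Measure Ω}

instance nullSingletonClass_cond [NullSingletonClass ν] (s : Set Ω) :
    NullSingletonClass ν[|s] :=
  ⟨fun x => cond_absolutelyContinuous (measure_singleton x)⟩

lemma measureReal_cond {s : Set Ω} (hs : MeasurableSet s) (t : Set Ω) :
    ν[|s].real t = ν.real (s ∩ t) / ν.real s := by
  simp [measureReal_def, cond_apply hs, ENNReal.toReal_mul, div_eq_inv_mul]

end Cond

lemma measure_setOf_cdf_cond_le_inter {μ : Measure ℝ} [IsFiniteMeasure μ] [NullSingletonClass μ]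
    {S : Set ℝ} (hS : MeasurableSet S) {u : ℝ} (hu : u ∈ Icc (0 : ℝ) 1) :
    μ ({y | cdf μ[|S] y ≤ u} ∩ S) = ENNReal.ofReal u * μ S := by
  rw [inter_comm, ← cond_mul_eq_inter hS]
  rcases eq_or_ne (μ S) 0 with hS0 | hS0
  · simp [hS0]
  · have := cond_isProbabilityMeasure hS0
    rw [measure_setOf_cdf_le hu]

lemma gaussianReal_real_apply (θ : ℝ) {v : ℝ≥0} (hv : v ≠ 0) (s : Set ℝ) :
    (gaussianReal θ v).real s =
      (√(2 * π * v))⁻¹ * ∫ t in s, Real.exp (-(t - θ) ^ 2 / (2 * v)) := by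
  rw [measureReal_def, gaussianReal_apply_eq_integral θ hv,
    ENNReal.toReal_ofReal (integral_nonneg fun t => gaussianPDFReal_nonneg θ v t),
    ← integral_const_mul]
  rfl

lemma FTN_eq_cdf_cond (z θ : ℝ) {v : ℝ≥0} (hv : v ≠ 0) {S : Set ℝ} (hS : MeasurableSet S)
    (hS0 : gaussianReal θ v S ≠ 0) : FTN z θ v S = cdf (gaussianReal θ v)[|S] z := by
  have := cond_isProbabilityMeasure hS0
  have hv0 : (0 : ℝ) < v := NNReal.coe_pos.2 (pos_iff_ne_zero.2 hv)
  have hC : (√(2 * π * v))⁻¹ ≠ 0 := by positivity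
  rw [cdf_eq_real, measureReal_cond hS, gaussianReal_real_apply θ hv,
    gaussianReal_real_apply θ hv, mul_div_mul_left _ _ hC, FTN]

lemma gaussianReal_setOf_FTN_le_inter (θ : ℝ) {v : ℝ≥0} (hv : v ≠ 0) {S : Set ℝ}
    (hS : MeasurableSet S) {u : ℝ} (hu : u ∈ Icc (0 : ℝ) 1) :
    gaussianReal θ v ({y | FTN y θ v S ≤ u} ∩ S) = ENNReal.ofReal u * gaussianReal θ v S := by
  have := nullSingletonClass_gaussianReal (μ := θ) hv
  rcases eq_or_ne (gaussianReal θ v S) 0 with hS0 | hS0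
  · simp [hS0, measure_mono_null inter_subset_right hS0]
  · simp_rw [FTN_eq_cdf_cond _ θ hv hS hS0]
    exact measure_setOf_cdf_cond_le_inter hS hu

end ProbabilityTheory

lemma measurable_setIntegral_preimage_prodMk {α β : Type*} [MeasurableSpace α]
    [MeasurableSpace β] {ν : Measure β} [SFinite ν] {G : Set (α × β)} (hG : MeasurableSet G)
    {f : β → ℝ} (hf : StronglyMeasurable f) :
    Measurable fun a => ∫ b in Prod.mk a ⁻¹' G, f b ∂ν := by
  have h := ((hf.comp_measurable measurable_snd).indicator hG).integral_prod_right' (ν := ν)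
  convert h.measurable using 2 with a
  rw [← integral_indicator (measurable_prodMk_left hG)]
  rfl

lemma measurable_FTN_of_measurableSet_graph {E : Type*} [MeasurableSpace E] (μ σ2 : ℝ)
    {T : E → Set ℝ} (hT : MeasurableSet {q : E × ℝ | q.2 ∈ T q.1}) :
    Measurable fun q : E × ℝ => FTN q.2 μ σ2 (T q.1) := by
  have hg : StronglyMeasurable fun t : ℝ => Real.exp (-(t - μ) ^ 2 / (2 * σ2)) :=
    (by fun_prop : Continuous fun t : ℝ => Real.exp (-(t - μ) ^ 2 / (2 * σ2))).stronglyMeasurable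
  have hT' : MeasurableSet {p : (E × ℝ) × ℝ | p.2 ∈ T p.1.1} :=
    hT.preimage ((measurable_fst.comp measurable_fst).prodMk measurable_snd)
  have hnum := measurable_setIntegral_preimage_prodMk (ν := volume)
    (hT'.inter (measurableSet_le measurable_snd (measurable_snd.comp measurable_fst))) hg
  exact hnum.div (measurable_setIntegral_preimage_prodMk hT' hg)

theorem stmt12_general {Ω E : Type*} [MeasurableSpace Ω] [MeasurableSpace E]
    (P : Measure Ω) [IsProbabilityMeasure P]
    (σ θ : ℝ) (hσ : 0 < σ)
    (Y : Ω → ℝ) (hY : Measurable Y)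
    (hlaw : Measure.map Y P = gaussianReal θ ⟨σ ^ 2, sq_nonneg σ⟩)
    (R : Ω → E) (hR : Measurable R)
    (hindep : IndepFun Y R P)
    (T : E → Set ℝ)
    (hgraph : MeasurableSet {q : E × ℝ | q.2 ∈ T q.1}) :
    ∀ u ∈ Set.Icc (0 : ℝ) 1,
      P ({ω | FTN (Y ω) θ (σ ^ 2) (T (R ω)) ≤ u} ∩ {ω | Y ω ∈ T (R ω)}) =
        ENNReal.ofReal u * P {ω | Y ω ∈ T (R ω)} := by
  intro u hu
  set v : ℝ≥0 := ⟨σ ^ 2, sq_nonneg σ⟩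
  have hv : v ≠ 0 := fun h => (pow_pos hσ 2).ne' (congrArg NNReal.toReal h)
  have hsection : ∀ A : Set (E × ℝ), MeasurableSet A →
      P ((fun ω => (R ω, Y ω)) ⁻¹' A) = ∫⁻ e, gaussianReal θ v (Prod.mk e ⁻¹' A) ∂P.map R := by
    intro A hA
    have hlaw_RY : P.map (fun ω => (R ω, Y ω)) = (P.map R).prod (gaussianReal θ v) := by
      rw [← hlaw]
      exact (indepFun_iff_map_prod_eq_prod_map_map hR.aemeasurable hY.aemeasurable).1 hindep.symm
    rw [← Measure.map_apply (hR.prodMk hY) hA, hlaw_RY, Measure.prod_apply hA]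
  have hA : MeasurableSet ({q : E × ℝ | FTN q.2 θ (σ ^ 2) (T q.1) ≤ u} ∩ {q | q.2 ∈ T q.1}) :=
    (measurable_FTN_of_measurableSet_graph θ (σ ^ 2) hgraph measurableSet_Iic).inter hgraph
  calc P ({ω | FTN (Y ω) θ (σ ^ 2) (T (R ω)) ≤ u} ∩ {ω | Y ω ∈ T (R ω)})
      = ∫⁻ e, gaussianReal θ v ({y | FTN y θ v (T e) ≤ u} ∩ T e) ∂P.map R := hsection _ hA
    _ = ∫⁻ e, ENNReal.ofReal u * gaussianReal θ v (T e) ∂P.map R :=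
        lintegral_congr fun e =>
          gaussianReal_setOf_FTN_le_inter θ hv (measurable_prodMk_left hgraph) hu
    _ = ENNReal.ofReal u * P {ω | Y ω ∈ T (R ω)} := by
        rw [lintegral_const_mul' _ _ ENNReal.ofReal_ne_top]
        exact congrArg _ (hsection _ hgraph).symm

/-- Pivotal quantity: if `Y ~ N(θ, σ²)`, `R` is independent of `Y`,
`T` is a measurable-graph family of truncation sets, and `P(Y ∈ T(R)) > 0`, then conditional
on `{Y ∈ T(R)}` the random variable `F_TN(Y; θ, σ², T(R))` is uniform on `(0,1)`:
for `u ∈ [0,1]`, `P({F_TN(Y; θ, σ², T(R)) ≤ u} ∩ {Y ∈ T(R)}) = u · P(Y ∈ T(R))`. -/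
theorem stmt12 {Ω E : Type*} [MeasurableSpace Ω] [MeasurableSpace E]
    (P : Measure Ω) [IsProbabilityMeasure P]
    (σ θ : ℝ) (hσ : 0 < σ)
    (Y : Ω → ℝ) (hY : Measurable Y)
    (hlaw : Measure.map Y P = gaussianReal θ ⟨σ ^ 2, sq_nonneg σ⟩)
    (R : Ω → E) (hR : Measurable R)
    (hindep : IndepFun Y R P)
    (T : E → Set ℝ)
    (hgraph : MeasurableSet {q : E × ℝ | q.2 ∈ T q.1})
    (hpos : 0 < P {ω | Y ω ∈ T (R ω)}) :
    ∀ u ∈ Set.Icc (0 : ℝ) 1,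
      P ({ω | FTN (Y ω) θ (σ ^ 2) (T (R ω)) ≤ u} ∩ {ω | Y ω ∈ T (R ω)}) =
        ENNReal.ofReal u * P {ω | Y ω ∈ T (R ω)} :=
  stmt12_general P σ θ hσ Y hY hlaw R hR hindep T hgraph
end

section
/- Let σ > 0, v > 0, and Δ ∈ ℝ, and set T̂ = |Δ|/√(2σ²) and h = v²/(v² + σ²). Then the inequality σ² ≥ (1 − h)·v²/2 + h²·Δ²/4 + σ²/2 holds if and only if T̂ ≤ √((σ²/v²)·(1 + σ²/v²)). -/
/-- Deviation condition in the stylized Bayesian example: with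
`T̂ = |Δ|/√(2σ²)` and posterior shrinkage `h = v²/(v² + σ²)`, the posterior-risk comparison
`σ² ≥ (1 − h)·v²/2 + h²·Δ²/4 + σ²/2` holds iff `T̂ ≤ √((σ²/v²)·(1 + σ²/v²))`. -/
theorem stmt19 (σ v Δ : ℝ) (hσ : 0 < σ) (hv : 0 < v)
    (That h : ℝ) (hThat : That = |Δ| / Real.sqrt (2 * σ ^ 2))
    (hh : h = v ^ 2 / (v ^ 2 + σ ^ 2)) :
    σ ^ 2 ≥ (1 - h) * v ^ 2 / 2 + h ^ 2 * Δ ^ 2 / 4 + σ ^ 2 / 2 ↔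
      That ≤ Real.sqrt ((σ ^ 2 / v ^ 2) * (1 + σ ^ 2 / v ^ 2)) := by
  subst hThat hh
  have hσ2 : (0:ℝ) < σ ^ 2 := by positivity
  have hv2 : (0:ℝ) < v ^ 2 := by positivity
  have hsum : (0:ℝ) < v ^ 2 + σ ^ 2 := by linarith
  have h2σ : (0:ℝ) < 2 * σ ^ 2 := by linarith
  -- rewrite RHS as polynomial inequality
  have hThat' : |Δ| / Real.sqrt (2 * σ ^ 2) = Real.sqrt (Δ ^ 2 / (2 * σ ^ 2)) := by
    rw [Real.sqrt_div' _ (by positivity), Real.sqrt_sq_eq_abs]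
  rw [hThat', Real.sqrt_le_sqrt_iff (by positivity)]
  have eR : (σ ^ 2 / v ^ 2) * (1 + σ ^ 2 / v ^ 2)
      = 2 * σ ^ 4 * (v ^ 2 + σ ^ 2) / (v ^ 2 * v ^ 2 * (2 * σ ^ 2)) := by
    field_simp
  rw [eR, div_le_div_iff₀ h2σ (by positivity)]
  have eL : (1 - v ^ 2 / (v ^ 2 + σ ^ 2)) * v ^ 2 / 2
      + (v ^ 2 / (v ^ 2 + σ ^ 2)) ^ 2 * Δ ^ 2 / 4 + σ ^ 2 / 2
      = (2 * σ ^ 2 * v ^ 2 * (v ^ 2 + σ ^ 2) + v ^ 4 * Δ ^ 2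
          + 2 * σ ^ 2 * (v ^ 2 + σ ^ 2) ^ 2) / (4 * (v ^ 2 + σ ^ 2) ^ 2) := by
    field_simp; ring
  rw [ge_iff_le, eL, div_le_iff₀ (by positivity)]
  constructor
  · intro hL
    nlinarith [hL, sq_nonneg (v ^ 2 + σ ^ 2), mul_pos hsum hsum]
  · intro hR
    nlinarith [hR, sq_nonneg (v ^ 2 + σ ^ 2)]
end
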